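/- arXiv:0906.0413 — 4 statements merged into one kernel-verified Lean document; each statement's English description precedes it below -/
import Mathlib

section
/- Let n ≥ 1 and N be natural numbers with N even, and let δ : Fin n → ℕ satisfy ∑ i, δ i = N and 2 · δ i ≤ N for every i. Let b : Fin N → Fin n be the block function determined by δ (that is, b x = i exactly when ∑_{i' < i} δ i' ≤ x < ∑_{i' ≤ i} δ i'). Then there exists a fixed-point-free involution σ of Fin N such that: (i) b (σ x) ≠ b x for every x ∈ Fin N (no point is matched to a point of its own block), and (ii) the matching is non-crossing, i.e. there do not exist a, c ∈ Fin N with a < c < σ a < σ c. -/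
/-!
The argument works for any colouring of evenly many points of a linear order in which no
colour occupies more than half of the points; the blocks need not be contiguous. Take a most
frequent colour `m`. Some two points adjacent in the order have different colours, one of
them `m`: match them. Such a pair crosses no other pair, and removing it keeps every colour
at most half of the remaining points: a colour `a` not involved satisfies `#a ≤ #m`, and the
classes of `a` and `m` miss the other removed point, so `2 * #a < #s`, hence
`2 * #a ≤ #s - 2` by parity. Induct.
-/

open Finset

section ColorCount

variable {α β : Type*} [DecidableEq α] [DecidableEq β] {s : Finset α} {c : α → β}

theorem two_mul_card_filter_lt_of_le {a m : β} (ham : a ≠ m)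
    (hle : #(s.filter (c · = a)) ≤ #(s.filter (c · = m))) {u : α} (hu : u ∈ s)
    (hua : c u ≠ a) (hum : c u ≠ m) :
    2 * #(s.filter (c · = a)) < #s := by
  have hdisj : Disjoint (s.filter (c · = a)) (s.filter (c · = m)) :=
    disjoint_filter.mpr fun _ _ hxa hxm => ham (hxa.symm.trans hxm)
  have hsub : s.filter (c · = a) ∪ s.filter (c · = m) ⊆ s.erase u := by
    intro x hx
    simp only [mem_union, mem_filter] at hx
    refine mem_erase.mpr ⟨?_, by tauto⟩
    rintro rfl
    tauto
  have := card_le_card hsub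
  rw [card_union_of_disjoint hdisj, card_erase_of_mem hu] at this
  have : 0 < #s := card_pos.mpr ⟨u, hu⟩
  omega

theorem two_mul_card_filter_erase_erase_le (hs : Even #s)
    (hcap : ∀ a, 2 * #(s.filter (c · = a)) ≤ #s) {m : β}
    (hm : ∀ x ∈ s, #(s.filter (c · = c x)) ≤ #(s.filter (c · = m))) {k k' : α}
    (hk : k ∈ s) (hk' : k' ∈ s) (hkk' : k ≠ k') (hc : c k = m ↔ c k' ≠ m) (a : β) :
    2 * #(((s.erase k).erase k').filter (c · = a)) ≤ #((s.erase k).erase k') := by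
  rw [filter_erase, filter_erase, card_erase_of_mem (mem_erase.mpr ⟨hkk'.symm, hk'⟩),
    card_erase_of_mem hk]
  have hT := hcap a
  obtain ⟨r, hr⟩ := hs
  by_cases hka : c k = a
  · have := card_erase_of_mem (s := s.filter (c · = a)) (mem_filter.mpr ⟨hk, hka⟩)
    have := card_erase_le (s := (s.filter (c · = a)).erase k) (a := k')
    omega
  by_cases hk'a : c k' = a
  · have := card_erase_of_mem (s := (s.filter (c · = a)).erase k)
      (mem_erase.mpr ⟨hkk'.symm, mem_filter.mpr ⟨hk', hk'a⟩⟩)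
    have := card_erase_le (s := s.filter (c · = a)) (a := k)
    omega
  rw [erase_eq_of_notMem (s := s.filter (c · = a)) fun h => hka (mem_filter.mp h).2,
    erase_eq_of_notMem (s := s.filter (c · = a)) fun h => hk'a (mem_filter.mp h).2]
  rcases (s.filter (c · = a)).eq_empty_or_nonempty with hempty | ⟨x, hx⟩
  · simp [hempty]
  obtain ⟨hxs, hxa⟩ := mem_filter.mp hx
  have hle := hm x hxs
  rw [hxa] at hle
  have hlt : 2 * #(s.filter (c · = a)) < #s := by
    by_cases hkm : c k = m
    · exact two_mul_card_filter_lt_of_le (fun h => hka (hkm.trans h.symm)) hle hk' hk'a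
        (hc.mp hkm)
    · have hk'm : c k' = m := not_not.mp (mt hc.mpr hkm)
      exact two_mul_card_filter_lt_of_le (fun h => hk'a (hk'm.trans h.symm)) hle hk hka hkm
  omega

end ColorCount

section Matching

variable {α β : Type*} [LinearOrder α]

structure IsProperNoncrossingMatching (s : Finset α) (c : α → β) (σ : α → α) : Prop where
  mapsTo : ∀ x ∈ s, σ x ∈ s
  involutive : ∀ x ∈ s, σ (σ x) = x
  color_ne : ∀ x ∈ s, c (σ x) ≠ c x
  not_crossing : ∀ a ∈ s, ∀ d ∈ s, a < d → d < σ a → ¬ σ a < σ d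

theorem Finset.exists_adjacent_of_lt {s : Finset α} {P : α → Prop} [DecidablePred P]
    {x y : α} (hx : x ∈ s) (hy : y ∈ s) (hxy : x < y) (hPx : P x) (hPy : ¬ P y) :
    ∃ k ∈ s, ∃ k' ∈ s, k < k' ∧ (∀ z ∈ s, k < z → k' ≤ z) ∧ P k ∧ ¬ P k' := by
  set k' := (s.filter fun z => x < z ∧ ¬ P z).min' ⟨y, by simp [hy, hxy, hPy]⟩ with hk'
  have hk'mem := min'_mem (s.filter fun z => x < z ∧ ¬ P z) ⟨y, by simp [hy, hxy, hPy]⟩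
  rw [← hk', mem_filter] at hk'mem
  have hk'min : ∀ z ∈ s, x < z → ¬ P z → k' ≤ z := fun z hz hxz hPz =>
    min'_le _ _ (by simp [hz, hxz, hPz])
  set k := (s.filter (· < k')).max' ⟨x, by simp [hx, hk'mem.2.1]⟩ with hk
  have hkmem := max'_mem (s.filter (· < k')) ⟨x, by simp [hx, hk'mem.2.1]⟩
  rw [← hk, mem_filter] at hkmem
  have hkmax : ∀ z ∈ s, z < k' → z ≤ k := fun z hz hzk' => le_max' _ _ (by simp [hz, hzk'])
  refine ⟨k, hkmem.1, k', hk'mem.1, hkmem.2, fun z hz hkz => ?_, ?_, hk'mem.2.2⟩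
  · by_contra! hzk'
    exact (hkmax z hz hzk').not_gt hkz
  · rcases (hkmax x hx hk'mem.2.1).eq_or_lt with hxk | hxk
    · rwa [← hxk]
    · by_contra hPk
      exact (hk'min k hkmem.1 hxk hPk).not_gt hkmem.2

theorem Finset.exists_adjacent_of_ne {s : Finset α} (P : α → Prop) [DecidablePred P]
    {x y : α} (hx : x ∈ s) (hy : y ∈ s) (hPx : P x) (hPy : ¬ P y) :
    ∃ k ∈ s, ∃ k' ∈ s, k < k' ∧ (∀ z ∈ s, k < z → k' ≤ z) ∧ (P k ↔ ¬ P k') := by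
  rcases lt_or_gt_of_ne (show x ≠ y by rintro rfl; exact hPy hPx) with hxy | hyx
  · obtain ⟨k, hk, k', hk', hkk', hadj, hPk, hPk'⟩ := exists_adjacent_of_lt hx hy hxy hPx hPy
    exact ⟨k, hk, k', hk', hkk', hadj, by tauto⟩
  · obtain ⟨k, hk, k', hk', hkk', hadj, hPk, hPk'⟩ :=
      exists_adjacent_of_lt (P := fun z => ¬ P z) hy hx hyx hPy (not_not.mpr hPx)
    exact ⟨k, hk, k', hk', hkk', hadj, by tauto⟩

theorem IsProperNoncrossingMatching.of_erase_adjacent {s : Finset α} {c : α → β} {σ : α → α}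
    {k k' : α} (hk : k ∈ s) (hk' : k' ∈ s) (hkk' : k < k') (hadj : ∀ z ∈ s, k < z → k' ≤ z)
    (hc : c k ≠ c k') (h : IsProperNoncrossingMatching ((s.erase k).erase k') c σ) :
    IsProperNoncrossingMatching s c (fun x => if x = k then k' else if x = k' then k else σ x) := by
  set τ : α → α := fun x => if x = k then k' else if x = k' then k else σ x
  have hτk : τ k = k' := if_pos rfl
  have hτk' : τ k' = k := by simp [τ, hkk'.ne']
  have hτ : ∀ x ∈ (s.erase k).erase k', τ x = σ x := fun x hx => by
    simp only [mem_erase] at hx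
    simp [τ, hx.1, hx.2.1]
  have hσ : ∀ x ∈ (s.erase k).erase k', σ x ≠ k' ∧ σ x ≠ k ∧ σ x ∈ s := fun x hx => by
    simpa only [mem_erase] using h.mapsTo x hx
  have hcases : ∀ x ∈ s, x = k ∨ x = k' ∨ x ∈ (s.erase k).erase k' := fun x hx => by
    simp only [mem_erase]
    tauto
  refine ⟨fun x hx => ?_, fun x hx => ?_, fun x hx => ?_, fun a ha d hd had hdσa hσaσd => ?_⟩
  · rcases hcases x hx with rfl | rfl | hx
    exacts [hτk ▸ hk', hτk' ▸ hk, hτ x hx ▸ (hσ x hx).2.2]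
  · rcases hcases x hx with rfl | rfl | hx
    · rw [hτk, hτk']
    · rw [hτk', hτk]
    · rw [hτ x hx, hτ _ (h.mapsTo x hx), h.involutive x hx]
  · rcases hcases x hx with rfl | rfl | hx
    · rw [hτk]; exact hc.symm
    · rw [hτk']; exact hc
    · rw [hτ x hx]; exact h.color_ne x hx
  · rcases hcases a ha with rfl | rfl | ha
    · exact (hadj d hd had).not_gt (hτk ▸ hdσa)
    · exact (had.trans (hτk' ▸ hdσa)).not_gt hkk'
    rw [hτ a ha] at hdσa hσaσd
    rcases hcases d hd with rfl | rfl | hd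
    · exact (hadj _ (hσ a ha).2.2 hdσa).not_gt (hτk ▸ hσaσd)
    · exact (hdσa.trans (hτk' ▸ hσaσd)).not_gt hkk'
    · rw [hτ d hd] at hσaσd
      exact h.not_crossing a ha d hd had hdσa hσaσd

theorem exists_isProperNoncrossingMatching [DecidableEq β] (c : α → β) (s : Finset α)
    (hs : Even #s) (hcap : ∀ a, 2 * #(s.filter (c · = a)) ≤ #s) :
    ∃ σ, IsProperNoncrossingMatching s c σ := by
  induction s using Finset.strongInduction with
  | H s ih =>
  rcases s.eq_empty_or_nonempty with rfl | hne
  · exact ⟨id, by simp, by simp, by simp, by simp⟩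
  obtain ⟨xm, hxm, hm⟩ := s.exists_max_image (fun x => #(s.filter (c · = c x))) hne
  have hy : ∃ y ∈ s, c y ≠ c xm := by
    by_contra! hall
    have := hcap (c xm)
    rw [filter_true_of_mem hall] at this
    have := card_pos.mpr hne
    omega
  obtain ⟨y, hy, hyc⟩ := hy
  obtain ⟨k, hk, k', hk', hkk', hadj, hc⟩ := exists_adjacent_of_ne (c · = c xm) hxm hy rfl hyc
  have hsub : (s.erase k).erase k' ⊂ s := (erase_ssubset (mem_erase.mpr ⟨hkk'.ne', hk'⟩)).trans
    (erase_ssubset hk)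
  have heven : Even #((s.erase k).erase k') := by
    rw [card_erase_of_mem (mem_erase.mpr ⟨hkk'.ne', hk'⟩), card_erase_of_mem hk]
    obtain ⟨r, hr⟩ := hs
    exact ⟨r - 1, by omega⟩
  obtain ⟨σ, hσ⟩ := ih _ hsub heven
    (two_mul_card_filter_erase_erase_le hs hcap hm hk hk' hkk'.ne hc)
  exact ⟨_, hσ.of_erase_adjacent hk hk' hkk' hadj fun h => by simp_all⟩

end Matching

theorem card_filter_block_le {n N : ℕ} {δ : Fin n → ℕ} {b : Fin N → Fin n}
    (hb : ∀ (x : Fin N) (i : Fin n), b x = i ↔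
      (∑ i' ∈ Finset.univ.filter (fun i' => i' < i), δ i') ≤ (x : ℕ) ∧
      (x : ℕ) < ∑ i' ∈ Finset.univ.filter (fun i' => i' ≤ i), δ i') (i : Fin n) :
    #(univ.filter (b · = i)) ≤ δ i := by
  have hsplit : ∑ i' ∈ univ.filter (fun i' => i' ≤ i), δ i'
      = δ i + ∑ i' ∈ univ.filter (fun i' => i' < i), δ i' := by
    rw [filter_ge_eq_Iic, filter_gt_eq_Iio, Iic_eq_cons_Iio, sum_cons]
  calc #(univ.filter (b · = i))
      ≤ #(Ico (∑ i' ∈ univ.filter (fun i' => i' < i), δ i')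
          (∑ i' ∈ univ.filter (fun i' => i' ≤ i), δ i')) :=
        card_le_card_of_injOn Fin.val (fun x hx => by simpa using (hb x i).mp (by simpa using hx))
          Fin.val_injective.injOn
    _ = δ i := by rw [Nat.card_Ico, hsplit, Nat.add_sub_cancel]

theorem stmt_0_general (n N : ℕ) (hNeven : Even N)
    (δ : Fin n → ℕ) (hmax : ∀ i, 2 * δ i ≤ N)
    (b : Fin N → Fin n)
    (hb : ∀ (x : Fin N) (i : Fin n), b x = i ↔
      (∑ i' ∈ Finset.univ.filter (fun i' => i' < i), δ i') ≤ (x : ℕ) ∧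
      (x : ℕ) < ∑ i' ∈ Finset.univ.filter (fun i' => i' ≤ i), δ i') :
    ∃ σ : Fin N → Fin N,
      Function.Involutive σ ∧
      (∀ x, σ x ≠ x) ∧
      (∀ x, b (σ x) ≠ b x) ∧
      ¬ ∃ a c : Fin N, a < c ∧ c < σ a ∧ σ a < σ c := by
  have hcap : ∀ i, 2 * #(univ.filter (b · = i)) ≤ #(univ : Finset (Fin N)) := fun i => by
    rw [card_univ, Fintype.card_fin]
    exact (Nat.mul_le_mul_left 2 (card_filter_block_le hb i)).trans (hmax i)
  obtain ⟨σ, hσ⟩ := exists_isProperNoncrossingMatching b univ (by simpa using hNeven) hcap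
  refine ⟨σ, fun x => hσ.involutive x (mem_univ x), fun x hx => hσ.color_ne x (mem_univ x)
    (congrArg b hx), fun x => hσ.color_ne x (mem_univ x), ?_⟩
  rintro ⟨a, d, had, hdσa, hσaσd⟩
  exact hσ.not_crossing a (mem_univ a) d (mem_univ d) had hdσa hσaσd

/-- Non-crossing perfect matching on `Fin N` avoiding matches inside the blocks
determined by the block-size function `δ : Fin n → ℕ`. -/
theorem stmt_0 (n N : ℕ) (hn : 1 ≤ n) (hNeven : Even N)
    (δ : Fin n → ℕ) (hsum : ∑ i, δ i = N) (hmax : ∀ i, 2 * δ i ≤ N)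
    (b : Fin N → Fin n)
    (hb : ∀ (x : Fin N) (i : Fin n), b x = i ↔
      (∑ i' ∈ Finset.univ.filter (fun i' => i' < i), δ i') ≤ (x : ℕ) ∧
      (x : ℕ) < ∑ i' ∈ Finset.univ.filter (fun i' => i' ≤ i), δ i') :
    ∃ σ : Fin N → Fin N,
      Function.Involutive σ ∧
      (∀ x, σ x ≠ x) ∧
      (∀ x, b (σ x) ≠ b x) ∧
      ¬ ∃ a c : Fin N, a < c ∧ c < σ a ∧ σ a < σ c :=
  stmt_0_general n N hNeven δ hmax b hb
end

section
/- Let n ≥ 1 and N be natural numbers with N even, and let δ : Fin n → ℕ satisfy ∑ i, δ i = N and 2 · δ i ≤ N for every i. Let b : Fin N → Fin n be the block function determined by δ (that is, b x = i exactly when ∑_{i' < i} δ i' ≤ x < ∑_{i' ≤ i} δ i'). For x ∈ Fin N let P x = exp(2·π·I·x/N) ∈ ℂ be the corresponding N-th root of unity. Then there exists a fixed-point-free involution σ of Fin N such that: (i) b (σ x) ≠ b x for every x, and (ii) the chords joining matched points are pairwise disjoint: for all x, y ∈ Fin N, if the pair {x, σ x} is distinct from the pair {y, σ y}, then the open segments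 openSegment ℝ (P x) (P (σ x)) and openSegment ℝ (P y) (P (σ y)) are disjoint. -/
/-!
Colour the roots of unity by their blocks, so that no colour is used by more than half of the
points. In such a balanced colouring, running through the points in increasing order one meets
two neighbours `p` and `q` (no point strictly between them) such that `p` lies in a largest colour
class and `q` does not. Removing both keeps the colouring balanced: another colour could only
become too large if it and the largest one together covered all points, but `q` is in neither.
By induction the remaining points carry a non-crossing matching joining different colours, and
the chord `p q` crosses none of its chords, since it separates no two remaining points.

Two chords of the circle are disjoint when the endpoints of one lie on the same arc cut off by
the other: the signed area of the triangle with vertices `e^{iα}, e^{iβ}, e^{iγ}` is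
`4 sin ((γ - β) / 2) sin ((β - α) / 2) sin ((γ - α) / 2)`, whose sign is read off from the order
of the angles in `[0, 2π)`.
-/

open Finset Real

theorem mem_uIoo_iff_of_notMem_uIoo {α : Type*} [LinearOrder α] {p q u v : α}
    (hu : u ∉ Set.uIoo p q) (hup : u ≠ p) (huq : u ≠ q)
    (hv : v ∉ Set.uIoo p q) (hvp : v ≠ p) (hvq : v ≠ q) :
    p ∈ Set.uIoo u v ↔ q ∈ Set.uIoo u v := by
  simp only [Set.uIoo_eq_union, Set.mem_union, Set.mem_Ioo] at *
  grind

theorem Finset.exists_adjacent {α : Type*} [LinearOrder α] {S : Finset α} {P : α → Prop}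
    {a b : α} (ha : a ∈ S) (hb : b ∈ S) (hPa : P a) (hPb : ¬P b) :
    ∃ p ∈ S, ∃ q ∈ S, P p ∧ ¬P q ∧ ∀ e ∈ S, e ∉ Set.uIoo p q := by
  classical
  obtain ⟨w, hwS, hw⟩ := S.exists_min_image id ⟨a, ha⟩
  obtain ⟨q, hq, hqmin⟩ := {e ∈ S | ¬(P e ↔ P w)}.exists_min_image id <| by
    by_cases h : P w
    · exact ⟨b, mem_filter.2 ⟨hb, by tauto⟩⟩
    · exact ⟨a, mem_filter.2 ⟨ha, by tauto⟩⟩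
  obtain ⟨hqS, hqw⟩ := mem_filter.1 hq
  have hwq : w < q :=
    (hw q hqS).lt_of_ne fun h => hqw (iff_of_eq (congrArg P (h : w = q)).symm)
  obtain ⟨p, hp, hpmax⟩ := {e ∈ S | e < q}.exists_max_image id ⟨w, mem_filter.2 ⟨hwS, hwq⟩⟩
  obtain ⟨hpS, hpq⟩ := mem_filter.1 hp
  have hpw : P p ↔ P w := by
    by_contra h
    exact (hqmin p (mem_filter.2 ⟨hpS, h⟩)).not_gt hpq
  have hadj : ∀ e ∈ S, e ∉ Set.uIoo p q := by
    rw [Set.uIoo_of_lt hpq]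
    exact fun e he ⟨hpe, heq⟩ => (hpmax e (mem_filter.2 ⟨he, heq⟩)).not_gt hpe
  by_cases h : P p
  · exact ⟨p, hpS, q, hqS, h, by tauto, hadj⟩
  · exact ⟨q, hqS, p, hpS, by tauto, h, Set.uIoo_comm p q ▸ hadj⟩

theorem StrictMono.mem_uIoo_iff {α β : Type*} [LinearOrder α] [LinearOrder β] {f : α → β}
    (hf : StrictMono f) {x a b : α} : f x ∈ Set.uIoo (f a) (f b) ↔ x ∈ Set.uIoo a b := by
  simp only [Set.uIoo_eq_union, Set.mem_union, Set.mem_Ioo, hf.lt_iff_lt]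

theorem Function.Involutive.ne_and_ne_of_pair_ne {α : Type*} [DecidableEq α] {σ : α → α}
    (hσ : Function.Involutive σ) {x y : α} (h : ({x, σ x} : Finset α) ≠ {y, σ y}) :
    y ≠ x ∧ y ≠ σ x := by
  refine ⟨fun hyx => h (by rw [hyx]), fun hyx => h ?_⟩
  rw [hyx, hσ x, pair_comm]

theorem sub_mul_sub_neg_iff_mem_uIoo {K : Type*} [Ring K] [LinearOrder K] [IsStrictOrderedRing K]
    {a b x : K} :
    (x - a) * (x - b) < 0 ↔ x ∈ Set.uIoo a b := by
  simp only [mul_neg_iff, sub_pos, sub_neg, Set.uIoo_eq_union, Set.mem_union, Set.mem_Ioo]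
  tauto

section Matching

variable {α ι : Type*} [LinearOrder α]

-- Points of `α` are placed on a circle in increasing order, so that two chords cross exactly
-- when their endpoints interleave.
structure IsNoncrossingMatching (c : α → ι) (S : Finset α) (σ : α → α) : Prop where
  mapsTo : ∀ x ∈ S, σ x ∈ S
  involutive : ∀ x ∈ S, σ (σ x) = x
  ne_self : ∀ x ∈ S, σ x ≠ x
  color_ne : ∀ x ∈ S, c (σ x) ≠ c x
  noncrossing : ∀ x ∈ S, ∀ y ∈ S, ({x, σ x} : Finset α) ≠ {y, σ y} →
    (y ∈ Set.uIoo x (σ x) ↔ σ y ∈ Set.uIoo x (σ x))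

namespace IsNoncrossingMatching

variable {c : α → ι}

theorem empty (σ : α → α) : IsNoncrossingMatching c ∅ σ := by
  constructor <;> simp

theorem insert_insert {S : Finset α} {σ : α → α} (hσ : IsNoncrossingMatching c S σ) {p q : α}
    (hpq : c p ≠ c q) (hp : p ∉ S) (hq : q ∉ S) (hS : ∀ e ∈ S, e ∉ Set.uIoo p q) :
    IsNoncrossingMatching c (insert p (insert q S))
      (fun z => if z = p then q else if z = q then p else σ z) := by
  set τ := fun z => if z = p then q else if z = q then p else σ z
  have hqp : q ≠ p := fun h => hpq (h ▸ rfl)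
  have hτp : τ p = q := if_pos rfl
  have hτq : τ q = p := by simp [τ, hqp]
  have hτS : ∀ z ∈ S, τ z = σ z := fun z hz => by
    simp [τ, ne_of_mem_of_not_mem hz hp, ne_of_mem_of_not_mem hz hq]
  have hσS : ∀ z ∈ S, σ z ∈ S := hσ.mapsTo
  have hcases : ∀ x ∈ insert p (insert q S),
      (x = p ∧ τ x = q) ∨ (x = q ∧ τ x = p) ∨ (x ∈ S ∧ τ x = σ x) := by
    intro x hx
    rcases mem_insert.1 hx with rfl | hx
    · exact Or.inl ⟨rfl, hτp⟩
    rcases mem_insert.1 hx with rfl | hx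
    · exact Or.inr (Or.inl ⟨rfl, hτq⟩)
    · exact Or.inr (Or.inr ⟨hx, hτS x hx⟩)
  have hchord : ∀ x ∈ S, (p ∈ Set.uIoo x (σ x) ↔ q ∈ Set.uIoo x (σ x)) := fun x hx =>
    mem_uIoo_iff_of_notMem_uIoo (hS x hx) (ne_of_mem_of_not_mem hx hp)
      (ne_of_mem_of_not_mem hx hq) (hS _ (hσS x hx)) (ne_of_mem_of_not_mem (hσS x hx) hp)
      (ne_of_mem_of_not_mem (hσS x hx) hq)
  refine ⟨fun x hx => ?_, fun x hx => ?_, fun x hx => ?_, fun x hx => ?_,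
    fun x hx y hy hxy => ?_⟩
  · rcases hcases x hx with ⟨rfl, h⟩ | ⟨rfl, h⟩ | ⟨hxS, h⟩ <;> rw [h]
    exacts [by simp, by simp, mem_insert_of_mem (mem_insert_of_mem (hσS x hxS))]
  · rcases hcases x hx with ⟨rfl, h⟩ | ⟨rfl, h⟩ | ⟨hxS, h⟩
    · rw [h, hτq]
    · rw [h, hτp]
    · rw [h, hτS _ (hσS x hxS), hσ.involutive x hxS]
  · rcases hcases x hx with ⟨rfl, h⟩ | ⟨rfl, h⟩ | ⟨hxS, h⟩ <;> rw [h]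
    exacts [hqp, hqp.symm, hσ.ne_self x hxS]
  · rcases hcases x hx with ⟨rfl, h⟩ | ⟨rfl, h⟩ | ⟨hxS, h⟩ <;> rw [h]
    exacts [hpq.symm, hpq, hσ.color_ne x hxS]
  rcases hcases x hx with ⟨rfl, hx'⟩ | ⟨rfl, hx'⟩ | ⟨hxS, hx'⟩ <;>
    rcases hcases y hy with ⟨rfl, hy'⟩ | ⟨rfl, hy'⟩ | ⟨hyS, hy'⟩ <;>
    simp only [hx', hy'] at hxy ⊢
  · exact absurd rfl hxy
  · exact absurd (pair_comm _ _) hxy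
  · exact iff_of_false (hS y hyS) (hS _ (hσS y hyS))
  · exact absurd (pair_comm _ _) hxy
  · exact absurd rfl hxy
  · rw [Set.uIoo_comm]
    exact iff_of_false (hS y hyS) (hS _ (hσS y hyS))
  · exact hchord x hxS
  · exact (hchord x hxS).symm
  · exact hσ.noncrossing x hxS y hyS hxy

end IsNoncrossingMatching

variable [DecidableEq ι]

def IsBalanced (c : α → ι) (S : Finset α) : Prop := ∀ i, 2 * #{x ∈ S | c x = i} ≤ #S

theorem IsBalanced.erase_erase {c : α → ι} {S : Finset α} (hbal : IsBalanced c S)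
    (heven : Even #S) {p q : α} (hp : p ∈ S) (hq : q ∈ S) (hpq : c p ≠ c q)
    (hmax : ∀ x ∈ S, #{y ∈ S | c y = c x} ≤ #{y ∈ S | c y = c p}) :
    IsBalanced c ((S.erase p).erase q) := by
  intro i
  have hqp : q ≠ p := fun h => hpq (h ▸ rfl)
  have hcard := card_erase_add_one hp
  have hcard' := card_erase_add_one (mem_erase.2 ⟨hqp, hq⟩)
  rw [filter_erase, filter_erase]
  by_cases hip : c p = i
  · have hpi : p ∈ {x ∈ S | c x = i} := mem_filter.2 ⟨hp, hip⟩
    rw [erase_eq_of_notMem (by simp [← hip, hpq.symm]), card_erase_of_mem hpi]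
    have := hbal i
    have := card_pos.2 ⟨p, hpi⟩
    omega
  by_cases hiq : c q = i
  · have hqi : q ∈ {x ∈ S | c x = i} := mem_filter.2 ⟨hq, hiq⟩
    rw [erase_eq_of_notMem (s := {x ∈ S | c x = i}) (by simp [hip]), card_erase_of_mem hqi]
    have := hbal i
    have := card_pos.2 ⟨q, hqi⟩
    omega
  rw [erase_eq_of_notMem (by simp [hiq]), erase_eq_of_notMem (by simp [hip])]
  -- the classes of `i` and of `c p` are disjoint and both miss `q`
  have hsum : #{x ∈ S | c x = i} + #{x ∈ S | c x = c p} ≤ #S - 1 := by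
    rw [← card_union_of_disjoint (disjoint_filter.2 fun x _ h => by rw [h]; exact Ne.symm hip),
      ← card_erase_of_mem hq]
    refine card_le_card fun x hx => ?_
    simp only [mem_union, mem_filter] at hx
    refine mem_erase.2 ⟨?_, by tauto⟩
    rintro rfl
    tauto
  have hle : #{x ∈ S | c x = i} ≤ #{x ∈ S | c x = c p} := by
    obtain h | ⟨x, hx⟩ := ({x ∈ S | c x = i}).eq_empty_or_nonempty
    · simp [h]
    · obtain ⟨hxS, rfl⟩ := mem_filter.1 hx
      exact hmax x hxS
  obtain ⟨k, hk⟩ := heven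
  omega

theorem exists_isNoncrossingMatching (c : α → ι) (S : Finset α) (heven : Even #S)
    (hbal : IsBalanced c S) : ∃ σ, IsNoncrossingMatching c S σ := by
  induction hm : #S using Nat.strong_induction_on generalizing S with
  | _ m ih =>
  obtain rfl | hS := S.eq_empty_or_nonempty
  · exact ⟨id, .empty id⟩
  obtain ⟨x₀, hx₀, hmax⟩ := S.exists_max_image (fun x => #{y ∈ S | c y = c x}) hS
  obtain ⟨y₀, hy₀, hy₀x₀⟩ : ∃ y ∈ S, c y ≠ c x₀ := by
    by_contra! h
    have := hbal (c x₀)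
    rw [filter_true_of_mem h] at this
    have := hS.card_pos
    omega
  obtain ⟨p, hp, q, hq, hpx₀, hqx₀, hadj⟩ :=
    exists_adjacent hx₀ hy₀ (P := fun x => c x = c x₀) rfl hy₀x₀
  have hpq : c p ≠ c q := hpx₀ ▸ Ne.symm hqx₀
  have hmax' : ∀ x ∈ S, #{y ∈ S | c y = c x} ≤ #{y ∈ S | c y = c p} := by
    simpa only [hpx₀] using hmax
  have hqp : q ≠ p := fun h => hpq (h ▸ rfl)
  have hq' : q ∈ S.erase p := mem_erase.2 ⟨hqp, hq⟩
  have hcard : #((S.erase p).erase q) + 2 = #S := by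
    have := card_erase_add_one hp
    have := card_erase_add_one hq'
    omega
  obtain ⟨σ, hσ⟩ := ih _ (by omega) ((S.erase p).erase q)
    ((Nat.even_add.1 (hcard ▸ heven)).2 even_two) (hbal.erase_erase heven hp hq hpq hmax') rfl
  have := hσ.insert_insert hpq (by simp) (by simp)
    fun e he => hadj e (mem_of_mem_erase (mem_of_mem_erase he))
  rw [insert_erase hq', insert_erase hp] at this
  exact ⟨_, this⟩

end Matching

-- Twice the signed area of the triangle `A B z`, positive when `z` lies left of the line `A B`.
def signedArea (A B z : ℂ) : ℝ := (B - A).re * (z - A).im - (B - A).im * (z - A).re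

theorem signedArea_add_smul {A B u v : ℂ} {a b : ℝ} (hab : a + b = 1) :
    signedArea A B (a • u + b • v) = a * signedArea A B u + b * signedArea A B v := by
  simp only [signedArea, Complex.real_smul, Complex.sub_re, Complex.sub_im, Complex.add_re,
    Complex.add_im, Complex.mul_re, Complex.mul_im, Complex.ofReal_re, Complex.ofReal_im]
  linear_combination ((B.re - A.re) * A.im - (B.im - A.im) * A.re) * hab

theorem disjoint_openSegment_of_signedArea_mul_pos {A B u v : ℂ}
    (h : 0 < signedArea A B u * signedArea A B v) :
    Disjoint (openSegment ℝ A B) (openSegment ℝ u v) := by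
  refine Set.disjoint_left.2 fun z ⟨a, b, _, _, hab, hAB⟩ ⟨a', b', ha', hb', hab', huv⟩ => ?_
  have hA : signedArea A B A = 0 := by simp [signedArea]
  have hB : signedArea A B B = 0 := by simp [signedArea]; ring
  have h0 : a' * signedArea A B u + b' * signedArea A B v = 0 := by
    rw [← signedArea_add_smul hab', huv, ← hAB, signedArea_add_smul hab, hA, hB]
    ring
  set s := signedArea A B u
  set t := signedArea A B v
  have hs : s ≠ 0 := left_ne_zero_of_mul h.ne'
  have : (0 : ℝ) < 0 := calc
    0 < a' * (s * s) + b' * (s * t) := add_pos (mul_pos ha' (mul_self_pos.2 hs)) (mul_pos hb' h)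
    _ = (a' * s + b' * t) * s := by ring
    _ = 0 := by rw [h0, zero_mul]
  exact lt_irrefl 0 this

theorem signedArea_exp_mul_I (α β γ : ℝ) :
    signedArea (Complex.exp (α * Complex.I)) (Complex.exp (β * Complex.I))
      (Complex.exp (γ * Complex.I)) =
      4 * sin ((γ - β) / 2) * sin ((β - α) / 2) * sin ((γ - α) / 2) := by
  have key (u v : ℝ) : sin (2 * u) + sin (2 * v) - sin (2 * (u + v)) =
      4 * sin u * sin v * sin (u + v) := by
    rw [sin_two_mul, sin_two_mul, sin_two_mul, sin_add, cos_add]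
    linear_combination (-2 * sin u * cos u) * sin_sq_add_cos_sq v +
      (-2 * sin v * cos v) * sin_sq_add_cos_sq u
  have := key ((γ - β) / 2) ((β - α) / 2)
  rw [show 2 * ((γ - β) / 2) = γ - β by ring, show 2 * ((β - α) / 2) = β - α by ring,
    show (γ - β) / 2 + (β - α) / 2 = (γ - α) / 2 by ring,
    show 2 * ((γ - α) / 2) = γ - α by ring, sin_sub, sin_sub, sin_sub] at this
  simp only [signedArea, Complex.sub_re, Complex.sub_im, Complex.exp_ofReal_mul_I_re,
    Complex.exp_ofReal_mul_I_im]
  linear_combination this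

theorem sign_sin_half {x : ℝ} (hx : |x| < 2 * π) :
    SignType.sign (sin (x / 2)) = SignType.sign x := by
  rw [abs_lt] at hx
  rcases lt_trichotomy x 0 with h | rfl | h
  · rw [sign_neg h, sign_neg (sin_neg_of_neg_of_neg_pi_lt (by linarith) (by linarith))]
  · simp
  · rw [sign_pos h, sign_pos (sin_pos_of_pos_of_lt_pi (by linarith) (by linarith))]

theorem sign_signedArea_exp_mul_I {α β γ : ℝ} (hα : α ∈ Set.Ico 0 (2 * π))
    (hβ : β ∈ Set.Ico 0 (2 * π)) (hγ : γ ∈ Set.Ico 0 (2 * π)) :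
    SignType.sign (signedArea (Complex.exp (α * Complex.I)) (Complex.exp (β * Complex.I))
      (Complex.exp (γ * Complex.I))) = SignType.sign ((γ - β) * (β - α) * (γ - α)) := by
  have hdist {s t : ℝ} (hs : s ∈ Set.Ico 0 (2 * π)) (ht : t ∈ Set.Ico 0 (2 * π)) :
      |s - t| < 2 * π := by
    rw [abs_sub_lt_iff]; constructor <;> linarith [hs.1, hs.2, ht.1, ht.2]
  rw [signedArea_exp_mul_I, sign_mul, sign_mul, sign_mul, sign_mul, sign_mul,
    sign_sin_half (hdist hγ hβ), sign_sin_half (hdist hβ hα), sign_sin_half (hdist hγ hα)]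
  simp

theorem disjoint_openSegment_exp_mul_I {α β γ γ' : ℝ} (hα : α ∈ Set.Ico 0 (2 * π))
    (hβ : β ∈ Set.Ico 0 (2 * π)) (hγ : γ ∈ Set.Ico 0 (2 * π)) (hγ' : γ' ∈ Set.Ico 0 (2 * π))
    (hαβ : α ≠ β) (hγα : γ ≠ α) (hγβ : γ ≠ β) (hγ'α : γ' ≠ α) (hγ'β : γ' ≠ β)
    (h : γ ∈ Set.uIoo α β ↔ γ' ∈ Set.uIoo α β) :
    Disjoint (openSegment ℝ (Complex.exp (α * Complex.I)) (Complex.exp (β * Complex.I)))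
      (openSegment ℝ (Complex.exp (γ * Complex.I)) (Complex.exp (γ' * Complex.I))) := by
  apply disjoint_openSegment_of_signedArea_mul_pos
  rw [← sign_eq_one_iff, sign_mul, sign_signedArea_exp_mul_I hα hβ hγ,
    sign_signedArea_exp_mul_I hα hβ hγ', ← sign_mul, sign_eq_one_iff]
  rw [show (γ - β) * (β - α) * (γ - α) * ((γ' - β) * (β - α) * (γ' - α)) =
    (β - α) ^ 2 * (((γ - α) * (γ - β)) * ((γ' - α) * (γ' - β))) by ring]
  have hne {t : ℝ} (hα : t ≠ α) (hβ : t ≠ β) : (t - α) * (t - β) ≠ 0 :=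
    mul_ne_zero (sub_ne_zero.2 hα) (sub_ne_zero.2 hβ)
  refine mul_pos (sq_pos_of_ne_zero (sub_ne_zero.2 hαβ.symm)) ?_
  rw [← sub_mul_sub_neg_iff_mem_uIoo, ← sub_mul_sub_neg_iff_mem_uIoo] at h
  by_cases hin : (γ - α) * (γ - β) < 0
  · exact mul_pos_of_neg_of_neg hin (h.1 hin)
  · exact mul_pos ((not_lt.1 hin).lt_of_ne (hne hγα hγβ).symm)
      ((not_lt.1 (mt h.2 hin)).lt_of_ne (hne hγ'α hγ'β).symm)

noncomputable def rootAngle (N : ℕ) (k : Fin N) : ℝ := 2 * π * k / N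

theorem rootAngle_mem_Ico {N : ℕ} (k : Fin N) : rootAngle N k ∈ Set.Ico 0 (2 * π) := by
  have hN : (0 : ℝ) < N := Nat.cast_pos.2 k.pos
  have hk : (k : ℝ) < N := Nat.cast_lt.2 k.isLt
  refine ⟨by unfold rootAngle; positivity, ?_⟩
  rw [rootAngle, div_lt_iff₀ hN]
  nlinarith [pi_pos]

theorem strictMono_rootAngle (N : ℕ) : StrictMono (rootAngle N) := fun a b h => by
  have hN : (0 : ℝ) < N := Nat.cast_pos.2 a.pos
  unfold rootAngle
  gcongr
  exact_mod_cast h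

theorem card_fiber_le_of_mem_Ico {n N : ℕ} (δ : Fin n → ℕ) (b : Fin N → Fin n) (i : Fin n)
    (hb : ∀ x, b x = i → ∑ i' ∈ Iio i, δ i' ≤ x ∧ (x : ℕ) < ∑ i' ∈ Iic i, δ i') :
    #{x | b x = i} ≤ δ i :=
  calc #{x | b x = i} ≤ #(Ico (∑ i' ∈ Iio i, δ i') (∑ i' ∈ Iic i, δ i')) :=
        card_le_card_of_injOn Fin.val (fun x hx => by simpa using hb x (mem_filter.1 hx).2)
          Fin.val_injective.injOn
    _ = δ i := by rw [Nat.card_Ico, ← sum_Iio_add_eq_sum_Iic]; omega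

theorem disjoint_openSegment_rootAngle {N : ℕ} {x x' y y' : Fin N} (hx : x ≠ x')
    (hyx : y ≠ x) (hyx' : y ≠ x') (hy'x : y' ≠ x) (hy'x' : y' ≠ x')
    (h : y ∈ Set.uIoo x x' ↔ y' ∈ Set.uIoo x x') :
    Disjoint (openSegment ℝ (Complex.exp (rootAngle N x * Complex.I))
        (Complex.exp (rootAngle N x' * Complex.I)))
      (openSegment ℝ (Complex.exp (rootAngle N y * Complex.I))
        (Complex.exp (rootAngle N y' * Complex.I))) := by
  have hθ := strictMono_rootAngle N
  exact disjoint_openSegment_exp_mul_I (rootAngle_mem_Ico x) (rootAngle_mem_Ico x')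
    (rootAngle_mem_Ico y) (rootAngle_mem_Ico y') (hθ.injective.ne hx) (hθ.injective.ne hyx)
    (hθ.injective.ne hyx') (hθ.injective.ne hy'x) (hθ.injective.ne hy'x')
    (by rwa [hθ.mem_uIoo_iff, hθ.mem_uIoo_iff])

theorem stmt_1_general (n N : ℕ) (hNeven : Even N)
    (δ : Fin n → ℕ) (hmax : ∀ i, 2 * δ i ≤ N)
    (b : Fin N → Fin n)
    (hb : ∀ (x : Fin N) (i : Fin n), b x = i ↔
      (∑ i' ∈ Finset.univ.filter (fun i' => i' < i), δ i') ≤ (x : ℕ) ∧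
      (x : ℕ) < ∑ i' ∈ Finset.univ.filter (fun i' => i' ≤ i), δ i')
    (P : Fin N → ℂ)
    (hP : ∀ x : Fin N, P x = Complex.exp (2 * Real.pi * Complex.I * (x : ℕ) / N)) :
    ∃ σ : Fin N → Fin N,
      Function.Involutive σ ∧
      (∀ x, σ x ≠ x) ∧
      (∀ x, b (σ x) ≠ b x) ∧
      (∀ x y : Fin N, ({x, σ x} : Finset (Fin N)) ≠ ({y, σ y} : Finset (Fin N)) →
        Disjoint (openSegment ℝ (P x) (P (σ x))) (openSegment ℝ (P y) (P (σ y)))) := by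
  have hbal : IsBalanced b univ := fun i => by
    have := card_fiber_le_of_mem_Ico δ b i fun x hx => by
      simpa only [filter_gt_eq_Iio, filter_ge_eq_Iic] using (hb x i).1 hx
    simpa using (Nat.mul_le_mul_left 2 this).trans (hmax i)
  obtain ⟨σ, hσ⟩ := exists_isNoncrossingMatching b univ (by simpa using hNeven) hbal
  have hinv : Function.Involutive σ := fun x => hσ.involutive x (mem_univ x)
  have hP' : ∀ x, P x = Complex.exp (rootAngle N x * Complex.I) := fun x => by
    rw [hP, rootAngle]
    push_cast
    ring_nf
  refine ⟨σ, hinv, fun x => hσ.ne_self x (mem_univ x), fun x => hσ.color_ne x (mem_univ x),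
    fun x y hxy => ?_⟩
  obtain ⟨hyx, hyσx⟩ := hinv.ne_and_ne_of_pair_ne hxy
  obtain ⟨hσyx, hσyσx⟩ :=
    hinv.ne_and_ne_of_pair_ne (x := x) (y := σ y) (by rwa [hinv y, pair_comm (σ y)])
  simp only [hP']
  exact disjoint_openSegment_rootAngle (hσ.ne_self x (mem_univ x)).symm hyx hyσx hσyx hσyσx
    (hσ.noncrossing x (mem_univ x) y (mem_univ y) hxy)

/-- Geometric form: a perfect matching of the `N`-th roots of unity by pairwise
disjoint straight chords, no chord joining two points of the same block. -/
theorem stmt_1 (n N : ℕ) (hn : 1 ≤ n) (hNeven : Even N)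
    (δ : Fin n → ℕ) (hsum : ∑ i, δ i = N) (hmax : ∀ i, 2 * δ i ≤ N)
    (b : Fin N → Fin n)
    (hb : ∀ (x : Fin N) (i : Fin n), b x = i ↔
      (∑ i' ∈ Finset.univ.filter (fun i' => i' < i), δ i') ≤ (x : ℕ) ∧
      (x : ℕ) < ∑ i' ∈ Finset.univ.filter (fun i' => i' ≤ i), δ i')
    (P : Fin N → ℂ)
    (hP : ∀ x : Fin N, P x = Complex.exp (2 * Real.pi * Complex.I * (x : ℕ) / N)) :
    ∃ σ : Fin N → Fin N,
      Function.Involutive σ ∧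
      (∀ x, σ x ≠ x) ∧
      (∀ x, b (σ x) ≠ b x) ∧
      (∀ x y : Fin N, ({x, σ x} : Finset (Fin N)) ≠ ({y, σ y} : Finset (Fin N)) →
        Disjoint (openSegment ℝ (P x) (P (σ x))) (openSegment ℝ (P y) (P (σ y)))) :=
  stmt_1_general n N hNeven δ hmax b hb P hP
end

section
/- Let n ≥ 1 and let δ : Fin n → ℕ satisfy: ∑ i, δ i is even, and 2 · δ i ≤ ∑ i', δ i' for every i. Then there exists a function W : Fin n → Fin n → ℕ such that W is symmetric (W i j = W j i for all i, j), W vanishes on the diagonal (W i i = 0 for all i), and ∑ j, W i j = δ i for every i. -/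
open Finset

private theorem stmt_2_aux (n : ℕ) (hn : 1 ≤ n) :
    ∀ S : ℕ, ∀ δ : Fin n → ℕ, ∑ i, δ i = S → Even S →
    (∀ i, 2 * δ i ≤ S) →
    ∃ W : Fin n → Fin n → ℕ,
      (∀ i j, W i j = W j i) ∧ (∀ i, W i i = 0) ∧ (∀ i, ∑ j, W i j = δ i) := by
  intro S
  induction S using Nat.strong_induction_on with
  | _ S IH =>
    intro δ hsum heven hmax
    rcases Nat.eq_zero_or_pos S with hS0 | hSpos
    · refine ⟨fun _ _ => 0, fun _ _ => rfl, fun _ => rfl, fun i => ?_⟩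
      have hle : δ i ≤ S := hsum ▸ Finset.single_le_sum (fun k _ => Nat.zero_le _) (mem_univ i)
      simp only [Finset.sum_const_zero]
      omega
    · haveI : NeZero n := ⟨by omega⟩
      obtain ⟨i, -, hi⟩ := Finset.exists_max_image (univ : Finset (Fin n)) δ univ_nonempty
      -- n ≥ 2
      have hn2 : 2 ≤ n := by
        by_contra h
        have hn1 : n = 1 := by omega
        subst hn1
        have : (univ : Finset (Fin 1)) = {i} := by
          apply Finset.eq_singleton_iff_unique_mem.2
          exact ⟨mem_univ i, fun x _ => Subsingleton.elim x i⟩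
        rw [this, Finset.sum_singleton] at hsum
        have := hmax i
        omega
      have herase : (univ.erase i).Nonempty := by
        rw [← Finset.card_pos, Finset.card_erase_of_mem (mem_univ i), Finset.card_univ,
          Fintype.card_fin]
        omega
      obtain ⟨j, hjmem, hj⟩ := Finset.exists_max_image (univ.erase i) δ herase
      have hji : j ≠ i := (Finset.mem_erase.1 hjmem).1
      -- split the sum
      have hsplit : δ i + (δ j + ∑ k ∈ (univ.erase i).erase j, δ k) = S := by
        rw [Finset.add_sum_erase _ δ hjmem, Finset.add_sum_erase _ δ (mem_univ i)]
        exact hsum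
      have hδj : 1 ≤ δ j := by
        by_contra h
        have hz : δ j = 0 := by omega
        have hzero : ∀ k ∈ univ.erase i, δ k = 0 := fun k hk =>
          Nat.le_zero.1 (hz ▸ hj k hk)
        have : ∑ k ∈ (univ.erase i).erase j, δ k = 0 :=
          Finset.sum_eq_zero fun k hk => hzero k (Finset.mem_of_mem_erase hk)
        have := hmax i
        omega
      have hδi : 1 ≤ δ i := le_trans hδj (hi j (mem_univ j))
      obtain ⟨m, hm⟩ := heven
      -- new degree function
      set δ' : Fin n → ℕ := Function.update (Function.update δ i (δ i - 1)) j (δ j - 1)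
        with hδ'def
      have hδ'i : δ' i = δ i - 1 := by
        rw [hδ'def, Function.update_of_ne (Ne.symm hji), Function.update_self]
      have hδ'j : δ' j = δ j - 1 := by rw [hδ'def, Function.update_self]
      have hδ'other : ∀ k, k ≠ i → k ≠ j → δ' k = δ k := fun k hki hkj => by
        rw [hδ'def, Function.update_of_ne hkj, Function.update_of_ne hki]
      have hsum' : ∑ k, δ' k = S - 2 := by
        rw [← Finset.add_sum_erase _ δ' (mem_univ i),
          ← Finset.add_sum_erase _ δ' (Finset.mem_erase.2 ⟨hji, mem_univ j⟩)]
        have heq : ∑ k ∈ (univ.erase i).erase j, δ' k = ∑ k ∈ (univ.erase i).erase j, δ k :=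
          Finset.sum_congr rfl fun k hk => hδ'other k (Finset.mem_erase.1 (Finset.mem_of_mem_erase hk)).1 (Finset.mem_erase.1 hk).1
        rw [heq, hδ'i, hδ'j]
        omega
      have hmax' : ∀ k, 2 * δ' k ≤ S - 2 := by
        intro k
        by_cases hki : k = i
        · subst hki; rw [hδ'i]; have := hmax k; omega
        by_cases hkj : k = j
        · subst hkj; rw [hδ'j]; have := hmax k; omega
        rw [hδ'other k hki hkj]
        have h1 : δ k ≤ δ j := hj k (Finset.mem_erase.2 ⟨hki, mem_univ k⟩)
        have h2 : δ j ≤ δ i := hi j (mem_univ j)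
        have h3 : δ k ≤ ∑ l ∈ (univ.erase i).erase j, δ l :=
          Finset.single_le_sum (fun l _ => Nat.zero_le _)
            (Finset.mem_erase.2 ⟨hkj, Finset.mem_erase.2 ⟨hki, mem_univ k⟩⟩)
        omega
      obtain ⟨W', hWsym, hWdiag, hWrow⟩ := IH (S - 2) (by omega) δ' hsum'
        (⟨m - 1, by omega⟩) hmax'
      refine ⟨fun k l => W' k l + (if (k = i ∧ l = j) ∨ (k = j ∧ l = i) then 1 else 0),
        ?_, ?_, ?_⟩
      · intro k l
        dsimp only
        rw [hWsym k l]
        by_cases h : (k = i ∧ l = j) ∨ (k = j ∧ l = i)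
        · rw [if_pos h, if_pos (by tauto)]
        · rw [if_neg h, if_neg (by tauto)]
      · intro k
        dsimp only
        rw [hWdiag k]
        have : ¬((k = i ∧ k = j) ∨ (k = j ∧ k = i)) := by
          rintro (⟨h1, h2⟩ | ⟨h1, h2⟩) <;> exact hji (h2 ▸ h1 ▸ rfl)
        simp [this]
      · intro k
        dsimp only
        rw [Finset.sum_add_distrib, hWrow k]
        by_cases hki : k = i
        · subst hki
          have hij : k ≠ j := Ne.symm hji
          simp only [hij, false_and, or_false, true_and, and_true]
          rw [Finset.sum_ite_eq' univ j (fun _ => (1:ℕ)), if_pos (mem_univ j), hδ'i]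
          omega
        by_cases hkj : k = j
        · subst hkj
          simp only [hji, false_and, false_or, true_and, and_true]
          rw [Finset.sum_ite_eq' univ i (fun _ => (1:ℕ)), if_pos (mem_univ i), hδ'j]
          omega
        · simp only [hki, hkj, false_and, false_or, or_self, if_false,
            Finset.sum_const_zero, add_zero]
          exact hδ'other k hki hkj
  
/-- Degree realization by a loopless multigraph: weights `W i j` counting arcs
between distinct punctures with prescribed degrees `δ i`. -/
theorem stmt_2 (n : ℕ) (hn : 1 ≤ n) (δ : Fin n → ℕ)
    (heven : Even (∑ i, δ i)) (hmax : ∀ i, 2 * δ i ≤ ∑ i', δ i') :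
    ∃ W : Fin n → Fin n → ℕ,
      (∀ i j, W i j = W j i) ∧
      (∀ i, W i i = 0) ∧
      (∀ i, ∑ j, W i j = δ i) := by
  exact stmt_2_aux n hn (∑ i, δ i) δ rfl heven hmax
end

section
/- Let n be a natural number and δ : Fin n → ℕ satisfy: ∑ i, δ i is even, and 2 · δ i ≤ ∑ i', δ i' for every i. Suppose j ∈ Fin n attains the maximum of δ (i.e. δ i ≤ δ j for all i), and suppose m ∈ Fin n satisfies m ≠ j and δ m ≥ 1. Define δ' : Fin n → ℕ by δ' j = δ j − 1, δ' m = δ m − 1, and δ' i = δ i for i ∉ {j, m}. Then ∑ i, δ' i = (∑ i, δ i) − 2 (in particular ∑ δ' is even), and 2 · δ' i ≤ ∑ i', δ' i' for every i. -/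
open Finset

/-! Removing one unit from the maximal weight `δ j` and one from another weight `δ m` lowers
the total by exactly 2, so `2 * δ' j ≤ ∑ δ'` and `2 * δ' m ≤ ∑ δ'` follow from the old
inequalities.
For any other index `i`, the three distinct weights `δ i ≤ δ j` and `δ m ≥ 1` give
`2 * δ i + 1 ≤ ∑ δ`, and parity of the total upgrades this to `2 * δ i + 2 ≤ ∑ δ`. -/

section

variable {ι : Type*} [DecidableEq ι]

lemma add_add_le_sum_univ [Fintype ι] {M : Type*} [AddCommMonoid M] [PartialOrder M]
    [IsOrderedAddMonoid M] [CanonicallyOrderedAdd M] (f : ι → M) {i j m : ι}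
    (hij : i ≠ j) (him : i ≠ m) (hjm : j ≠ m) :
    f i + f j + f m ≤ ∑ k, f k := by
  have hsub := sum_le_sum_of_subset (f := f) (subset_univ {i, j, m})
  rwa [sum_insert (by simp [hij, him]), sum_insert (by simp [hjm]), sum_singleton,
    ← add_assoc] at hsub

variable {δ δ' : ι → ℕ} {j m : ι}

lemma eq_add_single_add_single (hm : m ≠ j) (hδj : 1 ≤ δ j) (hδm : 1 ≤ δ m)
    (hδ'j : δ' j = δ j - 1) (hδ'm : δ' m = δ m - 1)
    (hδ'other : ∀ i, i ≠ j → i ≠ m → δ' i = δ i) (i : ι) :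
    δ i = δ' i + (Pi.single j 1 : ι → ℕ) i + (Pi.single m 1 : ι → ℕ) i := by
  by_cases hij : i = j
  · subst hij
    rw [hδ'j, Pi.single_eq_same, Pi.single_eq_of_ne hm.symm]
    omega
  by_cases him : i = m
  · subst him
    rw [hδ'm, Pi.single_eq_same, Pi.single_eq_of_ne hij]
    omega
  simp [hδ'other i hij him, hij, him]

lemma sum_eq_sum_add_two [Fintype ι] (hm : m ≠ j) (hδj : 1 ≤ δ j) (hδm : 1 ≤ δ m)
    (hδ'j : δ' j = δ j - 1) (hδ'm : δ' m = δ m - 1)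
    (hδ'other : ∀ i, i ≠ j → i ≠ m → δ' i = δ i) :
    ∑ i, δ i = ∑ i, δ' i + 2 := by
  simp_rw [eq_add_single_add_single hm hδj hδm hδ'j hδ'm hδ'other, sum_add_distrib,
    Fintype.sum_pi_single']

lemma two_mul_add_two_le_sum [Fintype ι] (heven : Even (∑ i, δ i)) (hj : ∀ i, δ i ≤ δ j)
    (hm : m ≠ j) (hδm : 1 ≤ δ m) {i : ι} (hij : i ≠ j) (him : i ≠ m) :
    2 * δ i + 2 ≤ ∑ k, δ k := by
  have hthree := add_add_le_sum_univ δ hij him hm.symm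
  have hi := hj i
  obtain ⟨k, hk⟩ := heven
  omega

end

/-- Arithmetic induction step: removing one arc between the block of maximal
weight and another nonempty block preserves the Riemann–Hurwitz-type
inequality, and drops the (even) total by 2. -/
theorem stmt_3 (n : ℕ) (δ : Fin n → ℕ)
    (heven : Even (∑ i, δ i)) (hmax : ∀ i, 2 * δ i ≤ ∑ i', δ i')
    (j m : Fin n) (hj : ∀ i, δ i ≤ δ j) (hm : m ≠ j) (hδm : 1 ≤ δ m)
    (δ' : Fin n → ℕ)
    (hδ'j : δ' j = δ j - 1) (hδ'm : δ' m = δ m - 1)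
    (hδ'other : ∀ i, i ≠ j → i ≠ m → δ' i = δ i) :
    (∑ i, δ' i = (∑ i, δ i) - 2) ∧
    Even (∑ i, δ' i) ∧
    (∀ i, 2 * δ' i ≤ ∑ i', δ' i') := by
  have hsum := sum_eq_sum_add_two hm (hδm.trans (hj m)) hδm hδ'j hδ'm hδ'other
  refine ⟨by omega, (Nat.even_add.mp (hsum ▸ heven)).mpr even_two, fun i => ?_⟩
  by_cases hij : i = j
  · subst hij
    have := hmax i
    rw [hδ'j]
    omega
  by_cases him : i = m
  · subst him
    have := hmax i
    rw [hδ'm]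
    omega
  have := two_mul_add_two_le_sum heven hj hm hδm hij him
  rw [hδ'other i hij him]
  omega
end
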